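/- Let u, v ∈ C³(Ω) solve Δu + H_v = 0, Δv + H_u = 0 on open Ω ⊆ ℝⁿ, with p = x·∇u, q = x·∇v. Then the pointwise divergence identity holds: Σᵢ ∂/∂xᵢ[ u_{xᵢ} q - p_{xᵢ} v + v_{xᵢ} p - q_{xᵢ} u + xᵢ(2H - u H_u - v H_v) ] = 2nH + (2-n)(u H_u + v H_v) + 2 Σᵢ xᵢ H_{xᵢ}. -/

import Mathlib

/-!
Expanding the divergence by the product rule, the mixed first-order terms `u_i q_i` and
`p_i v_i` cancel, leaving `Δu q - Δp v + Δv p - Δq u + n R + x·∇R` with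
`R = 2H - u H_u - v H_v`. The commutator identity `Δ(x·∇w) = 2Δw + x·∇(Δw)` and the equations
turn every Laplacian into `-H_u` or `-H_v` and its radial derivative, and the chain rule
`x·∇(H(x,u,v)) = Σ xᵢ H_{xᵢ} + H_u p + H_v q` makes the radial derivatives of `H_u`, `H_v`
cancel against those coming from `x·∇R`.
-/
open MeasureTheory Set Real
open scoped RealInnerProductSpace
noncomputable section

abbrev Euc (n : ℕ) := EuclideanSpace ℝ (Fin n)

/-- The partial derivative of `f` in the `i`-th coordinate direction. -/
def pd {n : ℕ} (f : Euc n → ℝ) (i : Fin n) (x : Euc n) : ℝ :=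
  fderiv ℝ f x (EuclideanSpace.single i 1)

/-- The Laplacian of `f`. -/
def lap {n : ℕ} (f : Euc n → ℝ) (x : Euc n) : ℝ :=
  ∑ i, pd (fun y => pd f i y) i x

/-- Partial derivative of `H(x,u,v)` with respect to `u`. -/
def Hu1 {n : ℕ} (H : Euc n → ℝ → ℝ → ℝ) (x : Euc n) (s t : ℝ) : ℝ :=
  deriv (fun s' => H x s' t) s

/-- Partial derivative of `H(x,u,v)` with respect to `v`. -/
def Hv1 {n : ℕ} (H : Euc n → ℝ → ℝ → ℝ) (x : Euc n) (s t : ℝ) : ℝ :=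
  deriv (fun t' => H x s t') t

/-- Partial derivative of `H(x,u,v)` with respect to `x_i`. -/
def Hx1 {n : ℕ} (H : Euc n → ℝ → ℝ → ℝ) (i : Fin n) (x : Euc n) (s t : ℝ) : ℝ :=
  pd (fun y => H y s t) i x

open Filter Topology

section PartialDerivatives

variable {n : ℕ} {f g : Euc n → ℝ} {x : Euc n}

lemma pd_congr (h : f =ᶠ[𝓝 x] g) (i : Fin n) : pd f i x = pd g i x := by
  rw [pd, pd, h.fderiv_eq]

lemma pd_add (hf : DifferentiableAt ℝ f x) (hg : DifferentiableAt ℝ g x) (i : Fin n) :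
    pd (fun y => f y + g y) i x = pd f i x + pd g i x := by
  simp [pd, fderiv_fun_add hf hg]

lemma pd_sub (hf : DifferentiableAt ℝ f x) (hg : DifferentiableAt ℝ g x) (i : Fin n) :
    pd (fun y => f y - g y) i x = pd f i x - pd g i x := by
  simp [pd, fderiv_fun_sub hf hg]

lemma pd_mul (hf : DifferentiableAt ℝ f x) (hg : DifferentiableAt ℝ g x) (i : Fin n) :
    pd (fun y => f y * g y) i x = pd f i x * g x + f x * pd g i x := by
  simp [pd, fderiv_fun_mul hf hg]
  ring

lemma pd_const_mul (hf : DifferentiableAt ℝ f x) (c : ℝ) (i : Fin n) :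
    pd (fun y => c * f y) i x = c * pd f i x := by
  simp [pd, fderiv_const_mul hf c]

lemma pd_neg (i : Fin n) : pd (fun y => -f y) i x = -pd f i x := by
  simp [pd]

lemma pd_sum {ι : Type*} {s : Finset ι} {F : ι → Euc n → ℝ}
    (hF : ∀ j ∈ s, DifferentiableAt ℝ (F j) x) (i : Fin n) :
    pd (fun y => ∑ j ∈ s, F j y) i x = ∑ j ∈ s, pd (F j) i x := by
  simp [pd, fderiv_fun_sum hF]

lemma pd_coord (i j : Fin n) (x : Euc n) : pd (fun y => y j) i x = if i = j then 1 else 0 := by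
  have h : HasFDerivAt (fun y : Euc n => y j) (EuclideanSpace.proj (𝕜 := ℝ) j) x :=
    (EuclideanSpace.proj (𝕜 := ℝ) j).hasFDerivAt
  rw [pd, h.fderiv]
  simp [eq_comm]

lemma differentiableAt_coord (j : Fin n) : DifferentiableAt ℝ (fun y : Euc n => y j) x :=
  (EuclideanSpace.proj (𝕜 := ℝ) j).differentiableAt

lemma ContDiffAt.pd {m : WithTop ℕ∞} (hf : ContDiffAt ℝ (m + 1) f x) (i : Fin n) :
    ContDiffAt ℝ m (pd f i) x :=
  (hf.fderiv_right le_rfl).clm_apply contDiffAt_const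

lemma pd_comm (hf : ContDiffAt ℝ 2 f x) (i j : Fin n) : pd (pd f i) j x = pd (pd f j) i x := by
  have hsymm := hf.isSymmSndFDerivAt (by simp [minSmoothness_of_isRCLikeNormedField])
  have hdf : DifferentiableAt ℝ (fderiv ℝ f) x :=
    (hf.fderiv_right (m := 1) (by norm_num)).differentiableAt (by norm_num)
  have hpdpd : ∀ a b : Fin n, pd (pd f a) b x
      = fderiv ℝ (fderiv ℝ f) x (EuclideanSpace.single b 1) (EuclideanSpace.single a 1) := by
    intro a b
    rw [pd, show pd f a = fun y => fderiv ℝ f y (EuclideanSpace.single a 1) from rfl,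
      fderiv_clm_apply hdf (differentiableAt_const _)]
    simp
  rw [hpdpd, hpdpd, hsymm]

end PartialDerivatives

/-- The radial derivative `x·∇w`; the paper's `p` and `q` are `euler u` and `euler v`. -/
def euler {n : ℕ} (w : Euc n → ℝ) : Euc n → ℝ := fun x => ∑ i, x i * pd w i x

section Euler

variable {n : ℕ} {f g : Euc n → ℝ} {x : Euc n}

lemma euler_congr (h : f =ᶠ[𝓝 x] g) : euler f x = euler g x := by
  simp only [euler, pd_congr h]

lemma euler_neg : euler (fun y => -f y) x = -euler f x := by
  simp [euler, pd_neg]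

lemma euler_sub (hf : DifferentiableAt ℝ f x) (hg : DifferentiableAt ℝ g x) :
    euler (fun y => f y - g y) x = euler f x - euler g x := by
  simp [euler, pd_sub hf hg, mul_sub]

lemma euler_mul (hf : DifferentiableAt ℝ f x) (hg : DifferentiableAt ℝ g x) :
    euler (fun y => f y * g y) x = euler f x * g x + f x * euler g x := by
  simp only [euler, pd_mul hf hg, Finset.sum_mul, Finset.mul_sum, ← Finset.sum_add_distrib]
  exact Finset.sum_congr rfl fun i _ => by ring

lemma euler_const_mul (hf : DifferentiableAt ℝ f x) (c : ℝ) :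
    euler (fun y => c * f y) x = c * euler f x := by
  simp only [euler, pd_const_mul hf, Finset.mul_sum]
  exact Finset.sum_congr rfl fun i _ => by ring

lemma euler_sum {ι : Type*} {s : Finset ι} {F : ι → Euc n → ℝ}
    (hF : ∀ j ∈ s, DifferentiableAt ℝ (F j) x) :
    euler (fun y => ∑ j ∈ s, F j y) x = ∑ j ∈ s, euler (F j) x := by
  simp only [euler, pd_sum hF, Finset.mul_sum]
  exact Finset.sum_comm

lemma ContDiffAt.euler {m : WithTop ℕ∞} (hf : ContDiffAt ℝ (m + 1) f x) :
    ContDiffAt ℝ m (euler f) x :=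
  ContDiffAt.sum fun j _ =>
    (EuclideanSpace.proj (𝕜 := ℝ) j).contDiff.contDiffAt.mul (hf.pd j)

lemma pd_euler (hf : ContDiffAt ℝ 2 f x) (i : Fin n) :
    pd (euler f) i x = pd f i x + euler (pd f i) x := by
  have hpd : ∀ j, DifferentiableAt ℝ (pd f j) x := fun j =>
    (hf.pd (m := 1) j).differentiableAt one_ne_zero
  change pd (fun y => ∑ j, y j * pd f j y) i x = _
  rw [pd_sum fun j _ => (differentiableAt_coord j).fun_mul (hpd j)]
  simp only [pd_mul (differentiableAt_coord _) (hpd _), pd_coord, pd_comm hf _ i,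
    Finset.sum_add_distrib, ite_mul, one_mul, zero_mul, Finset.sum_ite_eq, Finset.mem_univ,
    if_true, euler]

lemma lap_euler (hf : ContDiffAt ℝ 3 f x) : lap (euler f) x = 2 * lap f x + euler (lap f) x := by
  have hpd : ∀ i, ContDiffAt ℝ 2 (pd f i) x := fun i => hf.pd i
  have hpdpd : ∀ i, DifferentiableAt ℝ (pd (pd f i) i) x := fun i =>
    ((hpd i).pd (m := 1) i).differentiableAt one_ne_zero
  have hnear : ∀ i, pd (euler f) i =ᶠ[𝓝 x] fun y => pd f i y + euler (pd f i) y := fun i =>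
    (hf.eventually (by simp)).mono fun y hy => pd_euler (hy.of_le (by norm_num)) i
  have hsummand : ∀ i, pd (pd (euler f) i) i x
      = 2 * pd (pd f i) i x + euler (pd (pd f i) i) x := fun i => by
    rw [pd_congr (hnear i), pd_add ((hpd i).differentiableAt two_ne_zero)
      (((hpd i).euler (m := 1)).differentiableAt one_ne_zero), pd_euler (hpd i)]
    ring
  rw [lap, Finset.sum_congr rfl fun i _ => hsummand i, Finset.sum_add_distrib, ← Finset.mul_sum,
    lap, ← euler_sum fun i _ => hpdpd i]
  rfl

end Euler

section Hamiltonian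

variable {n : ℕ} {H : Euc n → ℝ → ℝ → ℝ} {u v : Euc n → ℝ} {x : Euc n}

lemma Hu1_eq_fderiv {s t : ℝ}
    (hH : DifferentiableAt ℝ (fun p : Euc n × ℝ × ℝ => H p.1 p.2.1 p.2.2) (x, s, t)) :
    Hu1 H x s t = fderiv ℝ (fun p : Euc n × ℝ × ℝ => H p.1 p.2.1 p.2.2) (x, s, t) (0, 1, 0) :=
  HasDerivAt.deriv (f := fun s' => H x s' t) <| by
    exact hH.hasFDerivAt.comp_hasDerivAt s
      ((hasDerivAt_const s x).prodMk ((hasDerivAt_id s).prodMk (hasDerivAt_const s t)))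

lemma Hv1_eq_fderiv {s t : ℝ}
    (hH : DifferentiableAt ℝ (fun p : Euc n × ℝ × ℝ => H p.1 p.2.1 p.2.2) (x, s, t)) :
    Hv1 H x s t = fderiv ℝ (fun p : Euc n × ℝ × ℝ => H p.1 p.2.1 p.2.2) (x, s, t) (0, 0, 1) :=
  HasDerivAt.deriv (f := fun t' => H x s t') <| by
    exact hH.hasFDerivAt.comp_hasDerivAt t
      ((hasDerivAt_const t x).prodMk ((hasDerivAt_const t s).prodMk (hasDerivAt_id t)))

lemma Hx1_eq_fderiv {s t : ℝ}
    (hH : DifferentiableAt ℝ (fun p : Euc n × ℝ × ℝ => H p.1 p.2.1 p.2.2) (x, s, t)) (i : Fin n) :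
    Hx1 H i x s t = fderiv ℝ (fun p : Euc n × ℝ × ℝ => H p.1 p.2.1 p.2.2) (x, s, t)
      (EuclideanSpace.single i 1, 0, 0) := by
  rw [Hx1, pd, HasFDerivAt.fderiv (f := fun y => H y s t) <| by
    exact hH.hasFDerivAt.comp x ((hasFDerivAt_id (𝕜 := ℝ) x).prodMk (hasFDerivAt_const (s, t) x))]
  rfl

lemma pd_hamiltonian_comp
    (hH : DifferentiableAt ℝ (fun p : Euc n × ℝ × ℝ => H p.1 p.2.1 p.2.2) (x, u x, v x))
    (hu : DifferentiableAt ℝ u x) (hv : DifferentiableAt ℝ v x) (i : Fin n) :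
    pd (fun y => H y (u y) (v y)) i x = Hx1 H i x (u x) (v x)
      + Hu1 H x (u x) (v x) * pd u i x + Hv1 H x (u x) (v x) * pd v i x := by
  have hsplit : ((EuclideanSpace.single i 1, pd u i x, pd v i x) : Euc n × ℝ × ℝ)
      = (EuclideanSpace.single i 1, 0, 0) + pd u i x • (0, 1, 0) + pd v i x • (0, 0, 1) := by
    simp
  rw [pd, HasFDerivAt.fderiv (f := fun y => H y (u y) (v y)) <| by
    exact hH.hasFDerivAt.comp x ((hasFDerivAt_id x).prodMk (hu.hasFDerivAt.prodMk hv.hasFDerivAt)),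
    Hx1_eq_fderiv hH, Hu1_eq_fderiv hH, Hv1_eq_fderiv hH]
  change fderiv ℝ _ _ (EuclideanSpace.single i 1, pd u i x, pd v i x) = _
  rw [hsplit, map_add, map_add, map_smul, map_smul, smul_eq_mul, smul_eq_mul]
  ring

lemma euler_hamiltonian_comp
    (hH : DifferentiableAt ℝ (fun p : Euc n × ℝ × ℝ => H p.1 p.2.1 p.2.2) (x, u x, v x))
    (hu : DifferentiableAt ℝ u x) (hv : DifferentiableAt ℝ v x) :
    euler (fun y => H y (u y) (v y)) x = ∑ i, x i * Hx1 H i x (u x) (v x)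
      + Hu1 H x (u x) (v x) * euler u x + Hv1 H x (u x) (v x) * euler v x := by
  simp only [euler, pd_hamiltonian_comp hH hu hv, Finset.mul_sum, ← Finset.sum_add_distrib]
  exact Finset.sum_congr rfl fun i _ => by ring

variable (hH : ContDiff ℝ 2 (fun p : Euc n × ℝ × ℝ => H p.1 p.2.1 p.2.2))
  (hu : DifferentiableAt ℝ u x) (hv : DifferentiableAt ℝ v x)
include hH hu hv

lemma differentiableAt_hamiltonian_comp : DifferentiableAt ℝ (fun y => H y (u y) (v y)) x :=
  (hH.differentiable two_ne_zero _).comp x (differentiableAt_id.prodMk (hu.prodMk hv))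

lemma differentiableAt_Hu1_comp : DifferentiableAt ℝ (fun y => Hu1 H y (u y) (v y)) x := by
  simp only [Hu1_eq_fderiv (hH.differentiable two_ne_zero _)]
  exact (((hH.fderiv_right (m := 1) le_rfl).clm_apply contDiff_const).differentiable
    one_ne_zero _).comp x (differentiableAt_id.prodMk (hu.prodMk hv))

lemma differentiableAt_Hv1_comp : DifferentiableAt ℝ (fun y => Hv1 H y (u y) (v y)) x := by
  simp only [Hv1_eq_fderiv (hH.differentiable two_ne_zero _)]
  exact (((hH.fderiv_right (m := 1) le_rfl).clm_apply contDiff_const).differentiable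
    one_ne_zero _).comp x (differentiableAt_id.prodMk (hu.prodMk hv))

end Hamiltonian

lemma sum_pd_pohozaev_flux {n : ℕ} {u v p q R : Euc n → ℝ} {x : Euc n}
    (hu : ContDiffAt ℝ 2 u x) (hv : ContDiffAt ℝ 2 v x) (hp : ContDiffAt ℝ 2 p x)
    (hq : ContDiffAt ℝ 2 q x) (hR : DifferentiableAt ℝ R x) :
    ∑ i, pd (fun y => pd u i y * q y - pd p i y * v y + pd v i y * p y - pd q i y * u y
        + y i * R y) i x
      = lap u x * q x - lap p x * v x + lap v x * p x - lap q x * u x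
        + (n * R x + euler R x) := by
  have d0 : ∀ {f : Euc n → ℝ}, ContDiffAt ℝ 2 f x → DifferentiableAt ℝ f x :=
    fun hf => hf.differentiableAt two_ne_zero
  have d1 : ∀ {f : Euc n → ℝ}, ContDiffAt ℝ 2 f x → ∀ i, DifferentiableAt ℝ (pd f i) x :=
    fun hf i => (hf.pd (m := 1) i).differentiableAt one_ne_zero
  have hsummand : ∀ i, pd (fun y => pd u i y * q y - pd p i y * v y + pd v i y * p y
        - pd q i y * u y + y i * R y) i x
      = pd (pd u i) i x * q x - pd (pd p i) i x * v x + pd (pd v i) i x * p x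
        - pd (pd q i) i x * u x + (R x + x i * pd R i x) := fun i => by
    have hui := (d1 hu i).fun_mul (d0 hq)
    have hpi := (d1 hp i).fun_mul (d0 hv)
    have hvi := (d1 hv i).fun_mul (d0 hp)
    have hqi := (d1 hq i).fun_mul (d0 hu)
    rw [pd_add (((hui.fun_sub hpi).fun_add hvi).fun_sub hqi)
        ((differentiableAt_coord i).fun_mul hR),
      pd_sub ((hui.fun_sub hpi).fun_add hvi) hqi, pd_add (hui.fun_sub hpi) hvi, pd_sub hui hpi,
      pd_mul (d1 hu i) (d0 hq), pd_mul (d1 hp i) (d0 hv), pd_mul (d1 hv i) (d0 hp),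
      pd_mul (d1 hq i) (d0 hu), pd_mul (differentiableAt_coord i) hR, pd_coord, if_pos rfl]
    ring
  simp only [hsummand, Finset.sum_add_distrib, Finset.sum_sub_distrib, ← Finset.sum_mul,
    Finset.sum_const, Finset.card_univ, Fintype.card_fin, nsmul_eq_mul]
  rfl

/-- pointwise divergence (differential) form of the Pohozaev identity for
the Hamiltonian system, with `p = x·∇u`, `q = x·∇v`. -/
theorem stmt15 {n : ℕ} (Ω : Set (Euc n)) (hΩ : IsOpen Ω)
    (H : Euc n → ℝ → ℝ → ℝ)
    (hH : ContDiff ℝ 2 (fun p : Euc n × ℝ × ℝ => H p.1 p.2.1 p.2.2))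
    (u v : Euc n → ℝ) (hu : ContDiffOn ℝ 3 u Ω) (hv : ContDiffOn ℝ 3 v Ω)
    (hequ : ∀ x ∈ Ω, lap u x + Hv1 H x (u x) (v x) = 0)
    (heqv : ∀ x ∈ Ω, lap v x + Hu1 H x (u x) (v x) = 0)
    (P Q : Euc n → ℝ)
    (hP : P = fun x => ∑ i, x i * pd u i x) (hQ : Q = fun x => ∑ i, x i * pd v i x) :
    ∀ x ∈ Ω,
      ∑ i, pd (fun y =>
          pd u i y * Q y - pd P i y * v y + pd v i y * P y - pd Q i y * u y
            + y i * (2 * H y (u y) (v y) - u y * Hu1 H y (u y) (v y)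
                - v y * Hv1 H y (u y) (v y))) i x
        = 2 * n * H x (u x) (v x)
            + (2 - n) * (u x * Hu1 H x (u x) (v x) + v x * Hv1 H x (u x) (v x))
            + 2 * ∑ i, x i * Hx1 H i x (u x) (v x) := by
  intro x hx
  obtain rfl : P = euler u := hP
  obtain rfl : Q = euler v := hQ
  have hux : ContDiffAt ℝ 3 u x := hu.contDiffAt (hΩ.mem_nhds hx)
  have hvx : ContDiffAt ℝ 3 v x := hv.contDiffAt (hΩ.mem_nhds hx)
  have du := hux.differentiableAt three_ne_zero
  have dv := hvx.differentiableAt three_ne_zero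
  have dh := differentiableAt_hamiltonian_comp hH du dv
  have dHu := differentiableAt_Hu1_comp hH du dv
  have dHv := differentiableAt_Hv1_comp hH du dv
  have hlapu : lap u =ᶠ[𝓝 x] fun y => -Hv1 H y (u y) (v y) :=
    eventually_of_mem (hΩ.mem_nhds hx) fun y hy => eq_neg_of_add_eq_zero_left (hequ y hy)
  have hlapv : lap v =ᶠ[𝓝 x] fun y => -Hu1 H y (u y) (v y) :=
    eventually_of_mem (hΩ.mem_nhds hx) fun y hy => eq_neg_of_add_eq_zero_left (heqv y hy)
  have d2h := dh.const_mul 2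
  have dR := (d2h.fun_sub (du.fun_mul dHu)).fun_sub (dv.fun_mul dHv)
  rw [sum_pd_pohozaev_flux (hux.of_le (by norm_num)) (hvx.of_le (by norm_num)) hux.euler hvx.euler
      dR, lap_euler hux, lap_euler hvx, euler_congr hlapu, euler_congr hlapv, euler_neg,
    euler_neg, hlapu.eq_of_nhds, hlapv.eq_of_nhds]
  rw [euler_sub (d2h.fun_sub (du.fun_mul dHu)) (dv.fun_mul dHv), euler_sub d2h (du.fun_mul dHu),
    euler_const_mul dh, euler_mul du dHu, euler_mul dv dHv,
    euler_hamiltonian_comp (hH.differentiable two_ne_zero _) du dv]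
  ring
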